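/- Let J ⊆ ℝ be an open interval and F : J → ℝ with F(u) ≠ u for all u ∈ J. Let G : J → ℝ be differentiable with G'(u) = 1/(F(u) − u). Let r : (θ₁, θ₂) → ℝ be twice differentiable, with (θ₁, θ₂) ⊆ (0, π), r'(θ)·cot(θ) + r(θ) ∈ J for all θ, and suppose r solves the ODE r''(θ) + r(θ) = F(r'(θ)·cot(θ) + r(θ)) on (θ₁, θ₂). Then the function I(θ) = (1/sin(θ))·exp( G(r'(θ)·cot(θ) + r(θ)) ) is constant on (θ₁, θ₂). -/

import Mathlib

/-!
Along a solution, `u = r' cot θ + r` satisfies `u' = (r'' - r' cot θ) cot θ = (F u - u) cot θ`,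
so `(G ∘ u)' = cot θ = (log sin)'`. Hence `log I = G ∘ u - log sin` has zero derivative.
-/

open Real Set

theorem Real.hasDerivAt_cot {x : ℝ} (hx : sin x ≠ 0) :
    HasDerivAt cot (-(1 + cot x ^ 2)) x := by
  have h := (hasDerivAt_cos x).fun_div (hasDerivAt_sin x) hx
  rw [show (fun y => cos y / sin y) = cot from funext fun y => (cot_eq_cos_div_sin y).symm] at h
  refine h.congr_deriv ?_
  rw [cot_eq_cos_div_sin]
  field_simp
  ring

theorem hasDerivAt_mul_cot_add {r r' : ℝ → ℝ} {r'' θ : ℝ} (hr : HasDerivAt r (r' θ) θ)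
    (hr' : HasDerivAt r' r'' θ) (hθ : sin θ ≠ 0) :
    HasDerivAt (fun x => r' x * cot x + r x) ((r'' - r' θ * cot θ) * cot θ) θ := by
  refine ((hr'.mul (hasDerivAt_cot hθ)).add hr).congr_deriv ?_
  ring

theorem hasDerivAt_one_div_sin_mul_exp {g : ℝ → ℝ} {θ : ℝ} (hg : HasDerivAt g (cot θ) θ)
    (hθ : sin θ ≠ 0) : HasDerivAt (fun x => 1 / sin x * exp (g x)) 0 θ := by
  have hinv : HasDerivAt (fun x => 1 / sin x) (-cos θ / sin θ ^ 2) θ := by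
    simpa only [one_div, neg_div] using (hasDerivAt_sin θ).fun_inv hθ
  refine (hinv.mul hg.exp).congr_deriv ?_
  rw [cot_eq_cos_div_sin]
  field_simp
  ring

theorem stmt_18_general (J : Set ℝ)
    (F G : ℝ → ℝ) (hF : ∀ u ∈ J, F u ≠ u)
    (hG : ∀ u ∈ J, HasDerivAt G (1 / (F u - u)) u)
    (θ₁ θ₂ : ℝ) (hsub : Set.Ioo θ₁ θ₂ ⊆ Set.Ioo 0 Real.pi)
    (r r' r'' : ℝ → ℝ)
    (hr : ∀ θ ∈ Set.Ioo θ₁ θ₂, HasDerivAt r (r' θ) θ)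
    (hr' : ∀ θ ∈ Set.Ioo θ₁ θ₂, HasDerivAt r' (r'' θ) θ)
    (hmem : ∀ θ ∈ Set.Ioo θ₁ θ₂, r' θ * Real.cot θ + r θ ∈ J)
    (hode : ∀ θ ∈ Set.Ioo θ₁ θ₂, r'' θ + r θ = F (r' θ * Real.cot θ + r θ)) :
    ∃ C : ℝ, ∀ θ ∈ Set.Ioo θ₁ θ₂,
      (1 / Real.sin θ) * Real.exp (G (r' θ * Real.cot θ + r θ)) = C := by
  have hI : ∀ θ ∈ Ioo θ₁ θ₂,
      HasDerivAt (fun x => 1 / sin x * exp (G (r' x * cot x + r x))) 0 θ := by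
    intro θ hθ
    have hsin : sin θ ≠ 0 := (sin_pos_of_pos_of_lt_pi (hsub hθ).1 (hsub hθ).2).ne'
    set u := r' θ * cot θ + r θ
    have hFu : F u - u = r'' θ - r' θ * cot θ := by rw [← hode θ hθ]; ring
    have hGu := (hG u (hmem θ hθ)).comp θ (hasDerivAt_mul_cot_add (hr θ hθ) (hr' θ hθ) hsin)
    have hcancel : 1 / (F u - u) * ((F u - u) * cot θ) = cot θ := by
      field_simp [sub_ne_zero.mpr (hF u (hmem θ hθ))]
    rw [← hFu, hcancel] at hGu
    exact hasDerivAt_one_div_sin_mul_exp hGu hsin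
  exact isOpen_Ioo.exists_is_const_of_deriv_eq_zero isPreconnected_Ioo
    (fun θ hθ => (hI θ hθ).differentiableAt.differentiableWithinAt)
    fun θ hθ => (hI θ hθ).deriv

/-- First integral of the Weingarten ODE: if `r'' + r = F(r' cot θ + r)` on
`(θ₁, θ₂) ⊆ (0, π)` and `G'(u) = 1/(F u - u)`, then
`I(θ) = (1/sin θ) exp(G(r' cot θ + r))` is constant on `(θ₁, θ₂)`. -/
theorem stmt_18 (J : Set ℝ) (hJopen : IsOpen J) (hJconn : J.OrdConnected)
    (F G : ℝ → ℝ) (hF : ∀ u ∈ J, F u ≠ u)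
    (hG : ∀ u ∈ J, HasDerivAt G (1 / (F u - u)) u)
    (θ₁ θ₂ : ℝ) (hsub : Set.Ioo θ₁ θ₂ ⊆ Set.Ioo 0 Real.pi)
    (r r' r'' : ℝ → ℝ)
    (hr : ∀ θ ∈ Set.Ioo θ₁ θ₂, HasDerivAt r (r' θ) θ)
    (hr' : ∀ θ ∈ Set.Ioo θ₁ θ₂, HasDerivAt r' (r'' θ) θ)
    (hmem : ∀ θ ∈ Set.Ioo θ₁ θ₂, r' θ * Real.cot θ + r θ ∈ J)
    (hode : ∀ θ ∈ Set.Ioo θ₁ θ₂, r'' θ + r θ = F (r' θ * Real.cot θ + r θ)) :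
    ∃ C : ℝ, ∀ θ ∈ Set.Ioo θ₁ θ₂,
      (1 / Real.sin θ) * Real.exp (G (r' θ * Real.cot θ + r θ)) = C :=
  stmt_18_general J F G hF hG θ₁ θ₂ hsub r r' r'' hr hr' hmem hode
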